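/- For all integers h ≥ 2 and w ≥ 5, the Sudoku intersection spectrum satisfies I(h,w) ⊇ Υ(hw), where Υ(n) = {0,1,...,n²−6, n²−4, n²}: every value in Υ(hw) is realized as the intersection size of two Sudoku latin squares of type (h,w), given that I(w) = Υ(w) for all w ≥ 5. -/
import Mathlib


def IsLatinOn {ρ γ σ : Type*} (L : ρ → γ → σ) : Prop :=
  (∀ i, Function.Bijective fun j => L i j) ∧ (∀ j, Function.Bijective fun i => L i j)

def IsLatin {n : ℕ} (L : Fin n → Fin n → Fin n) : Prop :=
  (∀ i, Function.Bijective fun j => L i j) ∧ (∀ j, Function.Bijective fun i => L i j)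

/-- A Sudoku latin square of type `(h,w)`: rows are indexed by
`(a,b) ∈ Fin w × Fin h` (block row `a`, row `b` within the block), columns by
`(c,d) ∈ Fin h × Fin w` (block column `c`, column `d` within the block); it is a
latin square of order `hw`, and each `h × w` box (fix `a` and `c`)
contains every symbol exactly once. -/
def IsSudoku {h w : ℕ} (L : Fin w × Fin h → Fin h × Fin w → Fin (h * w)) : Prop :=
  IsLatinOn L ∧
  ∀ (a : Fin w) (c : Fin h),
    Function.Bijective (fun p : Fin h × Fin w => L (a, p.1) (c, p.2))

def agreeCount {ρ γ σ : Type*} [Fintype ρ] [Fintype γ] [DecidableEq σ]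
    (A B : ρ → γ → σ) : ℕ :=
  (Finset.univ.filter fun p : ρ × γ => A p.1 p.2 = B p.1 p.2).card

def interCount {n : ℕ} (L L' : Fin n → Fin n → Fin n) : ℕ :=
  (Finset.univ.filter fun p : Fin n × Fin n => L p.1 p.2 = L' p.1 p.2).card

def Ups (n : ℕ) : Finset ℕ :=
  Finset.range (n^2 - 5) ∪ {n^2 - 4, n^2}

lemma mem_Ups_iff (w x : ℕ) : x ∈ Ups w ↔ x < w^2 - 5 ∨ x = w^2 - 4 ∨ x = w^2 := by
  simp only [Ups, Finset.mem_union, Finset.mem_range, Finset.mem_insert, Finset.mem_singleton]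

lemma decomp (m w t : ℕ) (hm : 2 ≤ m) (hw : 5 ≤ w)
    (ht : t < m * w^2 - 5 ∨ t = m * w^2 - 4 ∨ t = m * w^2) :
    ∃ q u v, q + 2 ≤ m ∧ u ∈ Ups w ∧ v ∈ Ups w ∧ t = q * w^2 + u + v := by
  have hW : 25 ≤ w^2 := by
    calc (25:ℕ) = 5^2 := by norm_num
    _ ≤ w^2 := Nat.pow_le_pow_left hw 2
  obtain ⟨M, rfl⟩ : ∃ M, m = M + 2 := ⟨m - 2, by omega⟩
  have hmW : (M+2) * w^2 = M * w^2 + 2 * w^2 := by ring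
  rcases ht with ht | ht | ht
  · -- t < (M+2) w² - 5
    rw [hmW] at ht
    obtain ⟨q, r, hdm, hrw⟩ : ∃ q r, w^2 * q + r = t ∧ r < w^2 :=
      ⟨t / w^2, t % w^2, Nat.div_add_mod t _, Nat.mod_lt _ (by omega)⟩
    have hqle : q ≤ M + 1 := by
      by_contra hc
      have h1 : M + 2 ≤ q := by omega
      have h2 : w^2 * (M + 2) ≤ w^2 * q := Nat.mul_le_mul_left (w^2) h1
      have h3 : w^2 * (M + 2) = M * w^2 + 2 * w^2 := by ring
      have h4 : w^2 * q ≤ t := by omega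
      omega
    rcases eq_or_lt_of_le hqle with hqe | hqlt
    · -- q = M+1 ; then r ≤ w²-6 ; use q' = M, u = w², v = r
      rw [hqe] at hdm
      have h1 : w^2 * (M+1) = M * w^2 + w^2 := by ring
      refine ⟨M, w^2, r, by omega, ?_, ?_, by omega⟩
      · rw [mem_Ups_iff]; tauto
      · rw [mem_Ups_iff]; left; omega
    · -- q ≤ M
      have hq2 : q + 2 ≤ M + 2 := by omega
      have hcm : w^2 * q = q * w^2 := mul_comm _ _
      by_cases hr6 : r < w^2 - 5
      · exact ⟨q, r, 0, hq2, by rw [mem_Ups_iff]; tauto,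
          by rw [mem_Ups_iff]; left; omega, by omega⟩
      · refine ⟨q, w^2 - 6, r - (w^2 - 6), hq2, ?_, ?_, by omega⟩
        · rw [mem_Ups_iff]; left; omega
        · rw [mem_Ups_iff]; left; omega
  · exact ⟨M, w^2, w^2 - 4, le_refl _, by rw [mem_Ups_iff]; tauto,
      by rw [mem_Ups_iff]; tauto, by omega⟩
  · exact ⟨M, w^2, w^2, le_refl _, by rw [mem_Ups_iff]; tauto,
      by rw [mem_Ups_iff]; tauto, by omega⟩

lemma exists_s (m w q u v t : ℕ) (hq : q + 2 ≤ m) (hw : 5 ≤ w)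
    (hu : u ∈ Ups w) (hv : v ∈ Ups w) (ht : t = q * w^2 + u + v) :
    ∃ s : ℕ → ℕ, (∀ i, s i ∈ Ups w) ∧ ∑ i ∈ Finset.range m, s i = t := by
  have hW : 25 ≤ w^2 := by
    calc (25:ℕ) = 5^2 := by norm_num
    _ ≤ w^2 := Nat.pow_le_pow_left hw 2
  refine ⟨fun i => if i < q then w^2 else if i = q then u else if i = q+1 then v else 0,
    ?_, ?_⟩
  · intro i
    dsimp only
    split_ifs
    · rw [mem_Ups_iff]; tauto
    · exact hu
    · exact hv
    · rw [mem_Ups_iff]; left; omega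
  · rw [← Finset.sum_subset (Finset.range_subset_range.2 hq)
      (by intro i _ hi; simp only [Finset.mem_range] at hi
          have h1 : ¬ i < q := by omega
          have h2 : ¬ i = q := by omega
          have h3 : ¬ i = q + 1 := by omega
          simp [h1, h2, h3])]
    rw [Finset.sum_range_succ, Finset.sum_range_succ]
    have e1 : ∑ i ∈ Finset.range q,
        (if i < q then w^2 else if i = q then u else if i = q+1 then v else 0)
        = ∑ _i ∈ Finset.range q, w^2 :=
      Finset.sum_congr rfl (fun i hi => by simp [Finset.mem_range.mp hi])
    have e2 : (if q < q then w^2 else if q = q then u else if q = q+1 then v else 0) = u := by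
      simp
    have e3 : (if q+1 < q then w^2 else if q+1 = q then u else if q+1 = q+1 then v else 0) = v := by
      have h1 : ¬ (q+1 < q) := by omega
      have h2 : ¬ (q+1 = q) := by omega
      simp [h1, h2]
    rw [e1, e2, e3, Finset.sum_const, Finset.card_range, smul_eq_mul]
    omega

section Constr

variable {h w : ℕ} [NeZero h]

/-- The basic Sudoku construction from an `h × h` family of latin squares of order `w`. -/
def mkSq (X : Fin h × Fin h → Fin w → Fin w → Fin w) :
    Fin w × Fin h → Fin h × Fin w → Fin (h * w) :=
  fun r cl => finProdFinEquiv (r.2 + cl.1, X (r.2, cl.1) r.1 cl.2)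

omit [NeZero h] in
lemma card_aux : Fintype.card (Fin h × Fin w) = Fintype.card (Fin (h * w)) := by
  simp [Fintype.card_prod]

lemma mkSq_sudoku (X : Fin h × Fin h → Fin w → Fin w → Fin w)
    (hX : ∀ p, IsLatin (X p)) : IsSudoku (mkSq X) := by
  refine ⟨⟨?_, ?_⟩, ?_⟩
  · -- rows
    rintro ⟨a, b⟩
    rw [Fintype.bijective_iff_injective_and_card]
    refine ⟨?_, card_aux⟩
    rintro ⟨c, d⟩ ⟨c', d'⟩ hj
    have hp := finProdFinEquiv.injective hj
    have h1 : c = c' := add_left_cancel (congrArg Prod.fst hp)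
    have h2 := congrArg Prod.snd hp
    simp only at h2
    rw [← h1] at h2
    have h3 : d = d' := ((hX (b, c)).1 a).injective h2
    exact Prod.ext h1 h3
  · -- columns
    rintro ⟨c, d⟩
    rw [Fintype.bijective_iff_injective_and_card]
    refine ⟨?_, by simp [Fintype.card_prod, Nat.mul_comm]⟩
    rintro ⟨a, b⟩ ⟨a', b'⟩ hj
    have hp := finProdFinEquiv.injective hj
    have h1 : b = b' := add_right_cancel (congrArg Prod.fst hp)
    have h2 := congrArg Prod.snd hp
    simp only at h2
    rw [← h1] at h2
    have h3 : a = a' := ((hX (b, c)).2 d).injective h2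
    exact Prod.ext h3 h1
  · -- boxes
    intro a c
    rw [Fintype.bijective_iff_injective_and_card]
    refine ⟨?_, card_aux⟩
    rintro ⟨b, d⟩ ⟨b', d'⟩ hj
    have hp := finProdFinEquiv.injective hj
    have h1 : b = b' := add_right_cancel (congrArg Prod.fst hp)
    have h2 := congrArg Prod.snd hp
    simp only at h2
    rw [← h1] at h2
    have h3 : d = d' := ((hX (b, c)).1 a).injective h2
    exact Prod.ext h1 h3

omit [NeZero h] in
lemma mkSq_agree (X Y : Fin h × Fin h → Fin w → Fin w → Fin w) :
    agreeCount (mkSq X) (mkSq Y) = ∑ p : Fin h × Fin h, interCount (X p) (Y p) := by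
  have key : ∀ (r : Fin w × Fin h) (cl : Fin h × Fin w),
      (mkSq X r cl = mkSq Y r cl) ↔
      (X (r.2, cl.1) r.1 cl.2 = Y (r.2, cl.1) r.1 cl.2) := by
    intro r cl
    constructor
    · intro hE
      exact congrArg Prod.snd (finProdFinEquiv.injective hE)
    · intro hE
      unfold mkSq
      rw [hE]
  rw [agreeCount, Finset.card_filter]
  have step1 : ∑ p : (Fin w × Fin h) × (Fin h × Fin w),
        (if mkSq X p.1 p.2 = mkSq Y p.1 p.2 then 1 else 0)
      = ∑ p : (Fin w × Fin h) × (Fin h × Fin w),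
        (if X (p.1.2, p.2.1) p.1.1 p.2.2 = Y (p.1.2, p.2.1) p.1.1 p.2.2 then 1 else 0) :=
    Finset.sum_congr rfl (fun p _ => if_congr (key p.1 p.2) rfl rfl)
  rw [step1]
  simp only [Fintype.sum_prod_type]
  rw [Finset.sum_comm]
  rw [Finset.sum_congr rfl
    (fun b _ => Finset.sum_comm (γ := Fin w) (s := Finset.univ) (t := Finset.univ))]
  exact Finset.sum_congr rfl (fun b _ => Finset.sum_congr rfl (fun c _ => by
    rw [interCount, Finset.card_filter, Fintype.sum_prod_type]))

end Constr

/-- For `h ≥ 2` and `w ≥ 5`, every value of `Υ(hw)` is realized as the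
intersection size of two Sudoku latin squares of type `(h,w)`, assuming the
known result `I(w) = Υ(w)` for ordinary latin squares of order `w ≥ 5`. -/
theorem sudoku_spectrum_superset {h w : ℕ} (hh : 2 ≤ h) (hw : 5 ≤ w)
    (hIw : ∀ s ∈ Ups w, ∃ A B : Fin w → Fin w → Fin w,
      IsLatin A ∧ IsLatin B ∧ interCount A B = s) :
    ∀ t ∈ Ups (h * w),
      ∃ L L' : Fin w × Fin h → Fin h × Fin w → Fin (h * w),
        IsSudoku L ∧ IsSudoku L' ∧ agreeCount L L' = t := by
  intro t ht
  haveI : NeZero h := ⟨by omega⟩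
  have hm2 : 2 ≤ h * h := le_trans (by norm_num) (Nat.mul_le_mul hh hh)
  have ht' : t < (h*h) * w^2 - 5 ∨ t = (h*h) * w^2 - 4 ∨ t = (h*h) * w^2 := by
    rw [mem_Ups_iff] at ht
    have hsq : (h*w)^2 = (h*h) * w^2 := by ring
    rw [hsq] at ht
    exact ht
  obtain ⟨q, u, v, hq, hu, hv, htv⟩ := decomp (h*h) w t hm2 hw ht'
  obtain ⟨s, hsU, hsum⟩ := exists_s (h*h) w q u v t hq hw hu hv htv
  have hsum2 : ∑ p : Fin h × Fin h, s (finProdFinEquiv p : Fin (h*h)) = t := by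
    rw [← hsum, ← Fin.sum_univ_eq_sum_range (fun i => s i) (h*h)]
    exact Fintype.sum_equiv finProdFinEquiv _ _ (fun p => rfl)
  have H : ∀ p : Fin h × Fin h, ∃ A B : Fin w → Fin w → Fin w,
      IsLatin A ∧ IsLatin B ∧ interCount A B = s (finProdFinEquiv p : Fin (h*h)) :=
    fun p => hIw _ (hsU _)
  choose A B hA hB hAB using H
  refine ⟨mkSq A, mkSq B, mkSq_sudoku A hA, mkSq_sudoku B hB, ?_⟩
  rw [mkSq_agree, Finset.sum_congr rfl (fun p _ => hAB p)]
  exact hsum2
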